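/- For every type-I energy E there exists a constant C = C(E) > 1 such that: (a) for every solution ψ of the eigen-equation H_λψ = Eψ and every n ∈ ℤ, C^{−1}·‖ψ⃗_0‖ ≤ ‖ψ⃗_n‖ ≤ C·‖ψ⃗_0‖; and (b) 1 ≤ ‖T_n(E)‖ ≤ C for every n ∈ ℤ. -/

import Mathlib

/-!
If `t_k(E) = 0` with `k ≥ 1`, then `A_k` and `B_k` (which have determinant `1` and equal traces)
both square to `-1`, so `A_{k+2} = (A_k B_k)(B_k A_k) = 1` and likewise `B_{k+2} = 1`.
Because the Thue–Morse word is a fixed point of its substitution, `T_{2^n} = A_n` and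
`T_{2^N m + r} = T_r^{±λ} T_{2^N m}` for `r ≤ 2^N`, the sign being the parity of `s(m)`
(and `B_n` is `A_n` at `-λ`). With `N = k + 2` every block `T_{2^N m}` is `1`, so
`(T_n)_{n ≥ 0}` takes finitely many values. The reflection symmetry `w(1 - n) = w(n)` makes
`M_0 ⋯ M_{1-n}` the conjugate of `T_nᵀ` by `diag(1, -1)`, and a `2 × 2` matrix of determinant `1`
satisfies `‖X⁻¹‖ = ‖X‖ ≥ 1`, its inverse being its transpose up to a rotation. Hence the `T_n` and
their inverses are uniformly bounded over `ℤ`, which bounds `ψ⃗_n = T_n ψ⃗_0` from both sides.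
-/

noncomputable section

open Filter Topology

namespace TMH

/-- number of ones in the binary expansion of a natural number -/
def onesCount (m : ℕ) : ℕ := (Nat.digits 2 m).sum

/-- The two-sided Thue–Morse potential: `w n = (−1)^{s(n−1)}` for `n ≥ 1`,
and `w (1−n) = w n` for `n ≥ 1`. -/
def w (n : ℤ) : ℝ :=
  if 1 ≤ n then (-1 : ℝ) ^ onesCount (n - 1).toNat
  else (-1 : ℝ) ^ onesCount (-n).toNat

end TMH
namespace TMH

/-- the one-step transfer matrix `M_n(E)` -/
def M (lam E : ℝ) (n : ℤ) : Matrix (Fin 2) (Fin 2) ℝ := !![E - lam * w n, -1; 1, 0]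

/-- `Tpos lam E k = M_k ⋯ M_1` -/
def Tpos (lam E : ℝ) : ℕ → Matrix (Fin 2) (Fin 2) ℝ
  | 0 => 1
  | k + 1 => M lam E (k + 1) * Tpos lam E k

/-- `Pneg lam E k = M_0 · M_{−1} ⋯ M_{1−k}` -/
def Pneg (lam E : ℝ) : ℕ → Matrix (Fin 2) (Fin 2) ℝ
  | 0 => 1
  | k + 1 => Pneg lam E k * M lam E (-(k : ℤ))

/-- the transfer matrix `T_n(E)` for `n : ℤ`: `T_0 = I`, `T_n = M_n ⋯ M_1` for `n ≥ 1`,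
and `T_{−n} = (M_0 M_{−1} ⋯ M_{1−n})⁻¹` for `n ≥ 1`. -/
def T (lam E : ℝ) (n : ℤ) : Matrix (Fin 2) (Fin 2) ℝ :=
  if 0 ≤ n then Tpos lam E n.toNat else (Pneg lam E (-n).toNat)⁻¹

end TMH
namespace TMH

/-- the pair `(A_n(E), B_n(E))`:  `A_0 = [[E−λ,−1],[1,0]]`, `B_0 = [[E+λ,−1],[1,0]]`,
`A_{n+1} = B_n A_n`, `B_{n+1} = A_n B_n`. -/
def AB (lam E : ℝ) : ℕ → Matrix (Fin 2) (Fin 2) ℝ × Matrix (Fin 2) (Fin 2) ℝ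
  | 0 => (!![E - lam, -1; 1, 0], !![E + lam, -1; 1, 0])
  | n + 1 => ((AB lam E n).2 * (AB lam E n).1, (AB lam E n).1 * (AB lam E n).2)

def A (lam E : ℝ) (n : ℕ) : Matrix (Fin 2) (Fin 2) ℝ := (AB lam E n).1
def B (lam E : ℝ) (n : ℕ) : Matrix (Fin 2) (Fin 2) ℝ := (AB lam E n).2

/-- the trace polynomials `t_n(E) = tr(A_n(E))` -/
def t (lam E : ℝ) (n : ℕ) : ℝ := (A lam E n).trace

/-- the set `Σ_I` of type-I energies -/
def SigmaI (lam : ℝ) : Set ℝ := {E | ∃ k : ℕ, 1 ≤ k ∧ t lam E k = 0}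

/-- the set `Σ_II` of type-II energies -/
def SigmaII (lam : ℝ) : Set ℝ :=
  {E | ∃ n₀ : ℕ, ∀ n : ℕ, n₀ ≤ n → |t lam E (2 * n)| ≤ 2 ∧ 2 < |t lam E (2 * n + 1)|}

/-- the set `Σ_III` of type-III energies -/
def SigmaIII (lam : ℝ) : Set ℝ :=
  {E | ∃ n₀ : ℕ, ∀ n : ℕ, n₀ ≤ n → |t lam E (2 * n + 1)| ≤ 2 ∧ 2 < |t lam E (2 * n)|}

end TMH
namespace TMH

/-- the vector `v_θ = (cos θ, −sin θ)ᵗ` -/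
def vec (θ : ℝ) : Fin 2 → ℝ := ![Real.cos θ, -Real.sin θ]

/-- the Euclidean norm on ℝ² -/
def vnorm (v : Fin 2 → ℝ) : ℝ := Real.sqrt (v 0 ^ 2 + v 1 ^ 2)

end TMH
namespace TMH

/-- the operator norm on 2×2 real matrices induced by the Euclidean norm on ℝ² -/
def opNorm (X : Matrix (Fin 2) (Fin 2) ℝ) : ℝ :=
  ‖(Matrix.toEuclideanCLM (𝕜 := ℝ) (n := Fin 2) X :
      EuclideanSpace ℝ (Fin 2) →L[ℝ] EuclideanSpace ℝ (Fin 2))‖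

end TMH
namespace TMH

/-- `ψ : ℤ → ℝ` is a (formal) solution of the eigen-equation `H_λ ψ = E ψ` -/
def IsSol (lam E : ℝ) (ψ : ℤ → ℝ) : Prop :=
  ∀ n : ℤ, ψ (n + 1) + ψ (n - 1) + lam * w n * ψ n = E * ψ n

/-- the vector `ψ⃗_n = (ψ_{n+1}, ψ_n)ᵗ` -/
def vsol (ψ : ℤ → ℝ) (n : ℤ) : Fin 2 → ℝ := ![ψ (n + 1), ψ n]

end TMH
namespace TMH

open scoped Matrix Matrix.Norms.L2Operator

lemma onesCount_two_mul (j : ℕ) : onesCount (2 * j) = onesCount j := by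
  rcases Nat.eq_zero_or_pos j with rfl | hj
  · rfl
  · rw [onesCount, Nat.digits_def' (by norm_num) (by omega)]
    simp [onesCount]

lemma onesCount_two_mul_add_one (j : ℕ) : onesCount (2 * j + 1) = onesCount j + 1 := by
  rw [onesCount, Nat.digits_def' (by norm_num) (by omega), show (2 * j + 1) % 2 = 1 by omega,
    show (2 * j + 1) / 2 = j by omega]
  simp [onesCount, add_comm]

lemma onesCount_two_pow_mul_add {N r : ℕ} (m : ℕ) (hr : r < 2 ^ N) :
    onesCount (2 ^ N * m + r) = onesCount m + onesCount r := by
  induction N generalizing r with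
  | zero =>
    obtain rfl : r = 0 := by omega
    simp [onesCount]
  | succ N ih =>
    rw [pow_succ] at hr ⊢
    obtain ⟨q, rfl | rfl⟩ := Nat.even_or_odd' r
    · rw [show 2 ^ N * 2 * m + 2 * q = 2 * (2 ^ N * m + q) by ring, onesCount_two_mul,
        onesCount_two_mul, ih (by omega)]
    · rw [show 2 ^ N * 2 * m + (2 * q + 1) = 2 * (2 ^ N * m + q) + 1 by ring,
        onesCount_two_mul_add_one, onesCount_two_mul_add_one, ih (by omega), add_assoc]

lemma w_natCast_add_one (i : ℕ) : w (i + 1) = (-1) ^ onesCount i := by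
  rw [w, if_pos (by omega)]
  simp

lemma w_neg_natCast (k : ℕ) : w (-k) = w (k + 1) := by
  rw [w_natCast_add_one, w, if_neg (by omega)]
  simp

lemma A_succ (lam E : ℝ) (n : ℕ) : A lam E (n + 1) = B lam E n * A lam E n := rfl

lemma B_succ (lam E : ℝ) (n : ℕ) : B lam E (n + 1) = A lam E n * B lam E n := rfl

lemma AB_neg (lam E : ℝ) (n : ℕ) : AB (-lam) E n = (AB lam E n).swap := by
  induction n with
  | zero => simp [AB, sub_eq_add_neg]
  | succ n ih => simp [AB, ih]

lemma A_neg (lam E : ℝ) (n : ℕ) : A (-lam) E n = B lam E n :=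
  congrArg Prod.fst (AB_neg lam E n)

lemma B_neg (lam E : ℝ) (n : ℕ) : B (-lam) E n = A lam E n :=
  congrArg Prod.snd (AB_neg lam E n)

lemma det_A (lam E : ℝ) (n : ℕ) : (A lam E n).det = 1 := by
  induction n generalizing lam with
  | zero => simp [A, AB, Matrix.det_fin_two_of]
  | succ n ih => rw [A_succ, Matrix.det_mul, ← A_neg, ih, ih, one_mul]

lemma det_B (lam E : ℝ) (n : ℕ) : (B lam E n).det = 1 := by
  rw [← A_neg, det_A]

lemma trace_B {lam E : ℝ} {k : ℕ} (hk : 1 ≤ k) : (B lam E k).trace = (A lam E k).trace := by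
  obtain ⟨n, rfl⟩ := Nat.exists_eq_add_of_le' hk
  rw [A_succ, B_succ, Matrix.trace_mul_comm]

lemma mul_self_eq_neg_one_of_trace_eq_zero {R : Type*} [CommRing R]
    {X : Matrix (Fin 2) (Fin 2) R} (ht : X.trace = 0) (hd : X.det = 1) : X * X = -1 := by
  rw [Matrix.trace_fin_two] at ht
  rw [Matrix.det_fin_two] at hd
  ext i j
  fin_cases i <;> fin_cases j <;> simp [Matrix.mul_apply]
  · linear_combination X 0 0 * ht - hd
  · linear_combination X 0 1 * ht
  · linear_combination X 1 0 * ht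
  · linear_combination X 1 1 * ht - hd

section TraceZero

variable {lam E : ℝ} {k : ℕ}

lemma A_mul_self_eq_neg_one (htk : t lam E k = 0) : A lam E k * A lam E k = -1 :=
  mul_self_eq_neg_one_of_trace_eq_zero htk (det_A lam E k)

variable (hk : 1 ≤ k) (htk : t lam E k = 0)
include hk htk

lemma B_mul_self_eq_neg_one : B lam E k * B lam E k = -1 :=
  mul_self_eq_neg_one_of_trace_eq_zero ((trace_B hk).trans htk) (det_B lam E k)

lemma A_add_two_eq_one : A lam E (k + 2) = 1 := by
  rw [A_succ, B_succ, A_succ, ← mul_assoc, mul_assoc (A lam E k), B_mul_self_eq_neg_one hk htk,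
    mul_neg_one, neg_mul, A_mul_self_eq_neg_one htk, neg_neg]

lemma B_add_two_eq_one : B lam E (k + 2) = 1 := by
  rw [B_succ, A_succ, B_succ, ← mul_assoc, mul_assoc (B lam E k), A_mul_self_eq_neg_one htk,
    mul_neg_one, neg_mul, B_mul_self_eq_neg_one hk htk, neg_neg]

end TraceZero

lemma Tpos_succ (lam E : ℝ) (k : ℕ) : Tpos lam E (k + 1) = M lam E (k + 1) * Tpos lam E k := rfl

lemma det_M (lam E : ℝ) (n : ℤ) : (M lam E n).det = 1 := by
  simp [M, Matrix.det_fin_two_of]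

lemma det_Tpos (lam E : ℝ) (k : ℕ) : (Tpos lam E k).det = 1 := by
  induction k with
  | zero => simp [Tpos]
  | succ k ih => rw [Tpos_succ, Matrix.det_mul, det_M, ih, one_mul]

lemma M_two_pow_mul_add (lam E : ℝ) {N i : ℕ} (m : ℕ) (hi : i < 2 ^ N) :
    M lam E ((2 ^ N * m + i : ℕ) + 1) = M ((-1) ^ onesCount m * lam) E (i + 1) := by
  simp only [M, w_natCast_add_one, onesCount_two_pow_mul_add m hi, pow_add]
  ring_nf

lemma Tpos_two_pow_mul_add (lam E : ℝ) {N r : ℕ} (m : ℕ) (hr : r ≤ 2 ^ N) :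
    Tpos lam E (2 ^ N * m + r) =
      Tpos ((-1) ^ onesCount m * lam) E r * Tpos lam E (2 ^ N * m) := by
  induction r with
  | zero => simp [Tpos]
  | succ r ih =>
    rw [← add_assoc, Tpos_succ, Tpos_succ, ih (by omega), M_two_pow_mul_add lam E m (by omega),
      mul_assoc]

lemma Tpos_two_pow (lam E : ℝ) (n : ℕ) : Tpos lam E (2 ^ n) = A lam E n := by
  induction n generalizing lam with
  | zero =>
    have hw : w 1 = 1 := by simpa [onesCount] using w_natCast_add_one 0
    simp [Tpos, M, A, AB, hw]
  | succ n ih =>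
    have h := Tpos_two_pow_mul_add lam E (N := n) 1 le_rfl
    rw [mul_one, show onesCount 1 = 1 by rfl, pow_one, neg_one_mul, ih, ih, A_neg] at h
    rw [pow_succ, mul_two, h, A_succ]

section Period

variable {lam E : ℝ} {N : ℕ} (hA : A lam E N = 1) (hB : B lam E N = 1)
include hA hB

lemma Tpos_two_pow_mul_eq_one (m : ℕ) : Tpos lam E (2 ^ N * m) = 1 := by
  induction m with
  | zero => rfl
  | succ m ih =>
    rw [mul_add_one, Tpos_two_pow_mul_add lam E m le_rfl, ih, mul_one, Tpos_two_pow]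
    rcases neg_one_pow_eq_or ℝ (onesCount m) with h | h
    · rw [h, one_mul, hA]
    · rw [h, neg_one_mul, A_neg, hB]

lemma Tpos_eq_Tpos_mod (k : ℕ) :
    Tpos lam E k = Tpos ((-1) ^ onesCount (k / 2 ^ N) * lam) E (k % 2 ^ N) := by
  conv_lhs => rw [← Nat.div_add_mod k (2 ^ N)]
  rw [Tpos_two_pow_mul_add lam E _ (Nat.mod_lt _ (by positivity)).le,
    Tpos_two_pow_mul_eq_one hA hB, mul_one]

lemma finite_range_Tpos : (Set.range (Tpos lam E)).Finite := by
  refine (Set.finite_range fun p : Bool × Fin (2 ^ N) ↦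
    Tpos (if p.1 then lam else -lam) E p.2).subset ?_
  rintro _ ⟨k, rfl⟩
  have hk : k % 2 ^ N < 2 ^ N := Nat.mod_lt _ (by positivity)
  rw [Tpos_eq_Tpos_mod hA hB k]
  rcases neg_one_pow_eq_or ℝ (onesCount (k / 2 ^ N)) with h | h
  · exact ⟨(true, ⟨_, hk⟩), by simp [h]⟩
  · exact ⟨(false, ⟨_, hk⟩), by simp [h]⟩

lemma exists_norm_Tpos_le : ∃ C, ∀ k, ‖Tpos lam E k‖ ≤ C := by
  obtain ⟨C, hC⟩ := ((finite_range_Tpos hA hB).image norm).bddAbove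
  exact ⟨C, fun k ↦ hC ⟨_, ⟨k, rfl⟩, rfl⟩⟩

end Period

def reflection : Matrix (Fin 2) (Fin 2) ℝ := !![1, 0; 0, -1]

def rotation : Matrix (Fin 2) (Fin 2) ℝ := !![0, -1; 1, 0]

lemma reflection_mul_self : reflection * reflection = 1 := by
  simp [reflection, Matrix.one_fin_two]

lemma reflection_mem_unitary : reflection ∈ unitary (Matrix (Fin 2) (Fin 2) ℝ) := by
  rw [← Matrix.unitaryGroup, Matrix.mem_unitaryGroup_iff, Matrix.star_eq_conjTranspose,
    Matrix.conjTranspose_eq_transpose_of_trivial]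
  ext i j
  fin_cases i <;> fin_cases j <;> simp [reflection, Matrix.mul_apply]

lemma rotation_mem_unitary : rotation ∈ unitary (Matrix (Fin 2) (Fin 2) ℝ) := by
  rw [← Matrix.unitaryGroup, Matrix.mem_unitaryGroup_iff, Matrix.star_eq_conjTranspose,
    Matrix.conjTranspose_eq_transpose_of_trivial]
  ext i j
  fin_cases i <;> fin_cases j <;> simp [rotation, Matrix.mul_apply]

lemma l2_opNorm_transpose {n : Type*} [Fintype n] [DecidableEq n] (X : Matrix n n ℝ) :
    ‖Xᵀ‖ = ‖X‖ := by
  rw [← Matrix.conjTranspose_eq_transpose_of_trivial, Matrix.l2_opNorm_conjTranspose]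

lemma adjugate_fin_two_eq_neg_rotation (X : Matrix (Fin 2) (Fin 2) ℝ) :
    X.adjugate = -(rotation * Xᵀ * rotation) := by
  rw [Matrix.adjugate_fin_two, Matrix.eta_fin_two Xᵀ, rotation]
  simp

lemma l2_opNorm_adjugate_fin_two (X : Matrix (Fin 2) (Fin 2) ℝ) : ‖X.adjugate‖ = ‖X‖ := by
  rw [adjugate_fin_two_eq_neg_rotation, norm_neg,
    CStarRing.norm_mul_mem_unitary _ rotation_mem_unitary,
    CStarRing.norm_mem_unitary_mul _ rotation_mem_unitary, l2_opNorm_transpose]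

section DetOne

variable {X : Matrix (Fin 2) (Fin 2) ℝ} (hX : X.det = 1)
include hX

lemma l2_opNorm_inv_of_det_eq_one : ‖X⁻¹‖ = ‖X‖ := by
  rw [Matrix.inv_def, hX, Ring.inverse_one, one_smul, l2_opNorm_adjugate_fin_two]

lemma one_le_l2_opNorm_of_det_eq_one : 1 ≤ ‖X‖ := by
  have hu : IsUnit X.det := by rw [hX]; exact isUnit_one
  have h : 1 ≤ ‖X‖ * ‖X‖ :=
    calc 1 = ‖X * X⁻¹‖ := by rw [Matrix.mul_nonsing_inv X hu, norm_one]
      _ ≤ ‖X‖ * ‖X⁻¹‖ := norm_mul_le _ _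
      _ = ‖X‖ * ‖X‖ := by rw [l2_opNorm_inv_of_det_eq_one hX]
  nlinarith [norm_nonneg X]

end DetOne

lemma M_transpose (lam E : ℝ) (n : ℤ) :
    (M lam E n)ᵀ = reflection * M lam E n * reflection := by
  ext i j
  fin_cases i <;> fin_cases j <;> simp [M, reflection, Matrix.mul_apply]

lemma Pneg_eq_reflection_mul_transpose (lam E : ℝ) (k : ℕ) :
    Pneg lam E k = reflection * (Tpos lam E k)ᵀ * reflection := by
  induction k with
  | zero => simp [Pneg, Tpos, reflection_mul_self]
  | succ k ih =>
    have hM : M lam E (-(k : ℤ)) = reflection * (M lam E (k + 1))ᵀ * reflection := by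
      rw [M_transpose, ← mul_assoc, ← mul_assoc, reflection_mul_self, one_mul, mul_assoc,
        reflection_mul_self, mul_one, M, M, w_neg_natCast]
    rw [Pneg, ih, hM, Tpos_succ, Matrix.transpose_mul]
    simp only [mul_assoc, ← mul_assoc reflection reflection, reflection_mul_self, one_mul]

lemma det_Pneg (lam E : ℝ) (k : ℕ) : (Pneg lam E k).det = 1 := by
  have h : reflection.det * reflection.det = 1 := by
    rw [← Matrix.det_mul, reflection_mul_self, Matrix.det_one]
  rw [Pneg_eq_reflection_mul_transpose, Matrix.det_mul, Matrix.det_mul, Matrix.det_transpose,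
    det_Tpos, mul_one, h]

lemma l2_opNorm_Pneg (lam E : ℝ) (k : ℕ) : ‖Pneg lam E k‖ = ‖Tpos lam E k‖ := by
  rw [Pneg_eq_reflection_mul_transpose, CStarRing.norm_mul_mem_unitary _ reflection_mem_unitary,
    CStarRing.norm_mem_unitary_mul _ reflection_mem_unitary, l2_opNorm_transpose]

lemma T_natCast (lam E : ℝ) (k : ℕ) : T lam E k = Tpos lam E k := by
  simp [T]

lemma T_neg_natCast (lam E : ℝ) {k : ℕ} (hk : k ≠ 0) : T lam E (-k) = (Pneg lam E k)⁻¹ := by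
  rw [T, if_neg (by omega)]
  simp

lemma det_T (lam E : ℝ) (n : ℤ) : (T lam E n).det = 1 := by
  rw [T]
  split_ifs
  · exact det_Tpos lam E _
  · rw [Matrix.det_nonsing_inv, det_Pneg, Ring.inverse_one]

lemma l2_opNorm_T_neg_natCast (lam E : ℝ) (k : ℕ) : ‖T lam E (-k)‖ = ‖Tpos lam E k‖ := by
  rcases eq_or_ne k 0 with rfl | hk
  · simpa using congrArg norm (T_natCast lam E 0)
  · rw [T_neg_natCast lam E hk, l2_opNorm_inv_of_det_eq_one (det_Pneg lam E k), l2_opNorm_Pneg]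

lemma exists_l2_opNorm_T_le {lam E : ℝ} {N : ℕ} (hA : A lam E N = 1) (hB : B lam E N = 1) :
    ∃ C, ∀ n, ‖T lam E n‖ ≤ C := by
  obtain ⟨C, hC⟩ := exists_norm_Tpos_le hA hB
  refine ⟨C, fun n ↦ ?_⟩
  obtain ⟨k, rfl | rfl⟩ := n.eq_nat_or_neg
  · rw [T_natCast]
    exact hC k
  · rw [l2_opNorm_T_neg_natCast]
    exact hC k

lemma vnorm_eq_norm (v : Fin 2 → ℝ) : vnorm v = ‖WithLp.toLp 2 v‖ := by
  simp [vnorm, EuclideanSpace.norm_eq, Fin.sum_univ_two]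

lemma vnorm_nonneg (v : Fin 2 → ℝ) : 0 ≤ vnorm v := Real.sqrt_nonneg _

lemma vnorm_mulVec_le (X : Matrix (Fin 2) (Fin 2) ℝ) (v : Fin 2 → ℝ) :
    vnorm (X *ᵥ v) ≤ ‖X‖ * vnorm v := by
  rw [vnorm_eq_norm, vnorm_eq_norm]
  exact X.l2_opNorm_mulVec (WithLp.toLp 2 v)

lemma inv_mul_vnorm_le_vnorm_mulVec {X : Matrix (Fin 2) (Fin 2) ℝ} (hX : X.det = 1)
    (v : Fin 2 → ℝ) : ‖X‖⁻¹ * vnorm v ≤ vnorm (X *ᵥ v) := by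
  have hu : IsUnit X.det := by rw [hX]; exact isUnit_one
  have hpos : 0 < ‖X‖ := one_pos.trans_le (one_le_l2_opNorm_of_det_eq_one hX)
  rw [inv_mul_le_iff₀ hpos]
  calc vnorm v = vnorm (X⁻¹ *ᵥ (X *ᵥ v)) := by
        rw [Matrix.mulVec_mulVec, Matrix.nonsing_inv_mul X hu, Matrix.one_mulVec]
    _ ≤ ‖X⁻¹‖ * vnorm (X *ᵥ v) := vnorm_mulVec_le _ _
    _ = ‖X‖ * vnorm (X *ᵥ v) := by rw [l2_opNorm_inv_of_det_eq_one hX]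

section Solution

variable {lam E : ℝ} {ψ : ℤ → ℝ} (hψ : IsSol lam E ψ)
include hψ

lemma vsol_eq_M_mulVec (n : ℤ) : vsol ψ n = M lam E n *ᵥ vsol ψ (n - 1) := by
  ext i
  fin_cases i
  · simp [vsol, M, Matrix.mulVec, dotProduct, Fin.sum_univ_two]
    linarith [hψ n]
  · simp [vsol, M, Matrix.mulVec, dotProduct, Fin.sum_univ_two]

lemma vsol_natCast (k : ℕ) : vsol ψ k = Tpos lam E k *ᵥ vsol ψ 0 := by
  induction k with
  | zero => simp [Tpos]
  | succ k ih =>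
    rw [Nat.cast_succ, vsol_eq_M_mulVec hψ, add_sub_cancel_right, ih, Matrix.mulVec_mulVec,
      Tpos_succ]

lemma Pneg_mulVec_vsol_neg (k : ℕ) : Pneg lam E k *ᵥ vsol ψ (-k) = vsol ψ 0 := by
  induction k with
  | zero => simp [Pneg]
  | succ k ih =>
    have h := vsol_eq_M_mulVec hψ (-k)
    rw [show -(k : ℤ) - 1 = -↑(k + 1) by push_cast; ring] at h
    rw [Pneg, ← Matrix.mulVec_mulVec, ← h, ih]

lemma vsol_eq_T_mulVec (n : ℤ) : vsol ψ n = T lam E n *ᵥ vsol ψ 0 := by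
  obtain ⟨k, rfl | rfl⟩ := n.eq_nat_or_neg
  · rw [T_natCast, vsol_natCast hψ]
  · rcases eq_or_ne k 0 with rfl | hk
    · simpa [← T_natCast] using vsol_natCast hψ 0
    · have hu : IsUnit (Pneg lam E k).det := by rw [det_Pneg]; exact isUnit_one
      rw [T_neg_natCast lam E hk, ← Pneg_mulVec_vsol_neg hψ k, Matrix.mulVec_mulVec,
        Matrix.nonsing_inv_mul _ hu, Matrix.one_mulVec]

end Solution

theorem typeI_extended_general (lam : ℝ) (E : ℝ) (hE : E ∈ SigmaI lam) :
    ∃ C : ℝ, 1 < C ∧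
      (∀ ψ : ℤ → ℝ, IsSol lam E ψ → ∀ n : ℤ,
        C⁻¹ * vnorm (vsol ψ 0) ≤ vnorm (vsol ψ n) ∧
        vnorm (vsol ψ n) ≤ C * vnorm (vsol ψ 0)) ∧
      (∀ n : ℤ, 1 ≤ opNorm (T lam E n) ∧ opNorm (T lam E n) ≤ C) := by
  obtain ⟨k, hk, htk⟩ := hE
  obtain ⟨C, hC⟩ := exists_l2_opNorm_T_le (A_add_two_eq_one hk htk) (B_add_two_eq_one hk htk)
  have hT (n : ℤ) : 1 ≤ ‖T lam E n‖ := one_le_l2_opNorm_of_det_eq_one (det_T lam E n)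
  have hTC (n : ℤ) : ‖T lam E n‖ ≤ C + 1 := by linarith [hC n]
  refine ⟨C + 1, by linarith [hT 0, hC 0], fun ψ hψ n ↦ ?_, fun n ↦ ⟨hT n, hTC n⟩⟩
  rw [vsol_eq_T_mulVec hψ n]
  constructor
  · calc (C + 1)⁻¹ * vnorm (vsol ψ 0) ≤ ‖T lam E n‖⁻¹ * vnorm (vsol ψ 0) := by
          gcongr
          · exact vnorm_nonneg _
          · linarith [hT n]
          · exact hTC n
      _ ≤ _ := inv_mul_vnorm_le_vnorm_mulVec (det_T lam E n) _
  · calc _ ≤ ‖T lam E n‖ * vnorm (vsol ψ 0) := vnorm_mulVec_le _ _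
      _ ≤ (C + 1) * vnorm (vsol ψ 0) := by
          gcongr
          · exact vnorm_nonneg _
          · exact hTC n

/-- **Proposition (type-I energies are extended states).**
For every type-I energy `E` there is `C = C(E) > 1` such that every formal solution `ψ`
of `H_λψ = Eψ` satisfies `C⁻¹‖ψ⃗_0‖ ≤ ‖ψ⃗_n‖ ≤ C‖ψ⃗_0‖` for all `n ∈ ℤ`, and
`1 ≤ ‖T_n(E)‖ ≤ C` for all `n ∈ ℤ`. -/
theorem typeI_extended (lam : ℝ) (hlam : lam ≠ 0) (E : ℝ) (hE : E ∈ SigmaI lam) :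
    ∃ C : ℝ, 1 < C ∧
      (∀ ψ : ℤ → ℝ, IsSol lam E ψ → ∀ n : ℤ,
        C⁻¹ * vnorm (vsol ψ 0) ≤ vnorm (vsol ψ n) ∧
        vnorm (vsol ψ n) ≤ C * vnorm (vsol ψ 0)) ∧
      (∀ n : ℤ, 1 ≤ opNorm (T lam E n) ∧ opNorm (T lam E n) ≤ C) :=
  typeI_extended_general lam E hE

end TMH
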